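/- arXiv:1802.07027 — 5 statements merged into one kernel-verified Lean document; each statement's English description precedes it below -/
import Mathlib

section
/- Let τ ≥ 1 be an integer and let P be a probability mass function on ℤ supported in S_τ, with first moment m = Σ_x x·P(x) satisfying −τ < m < τ, and set p* = 1/2 + m/(2τ). Then for every p ∈ (0,1) the Pythagorean identity D(P ‖ Bin_{τ,p}) = D(P ‖ Bin_{τ,p*}) + τ · d(p* ‖ p) holds. -/
/-- The random-walk (binomial) position distribution on `ℤ` after `τ` steps with
right-step probability `p`. -/
noncomputable def binPMF (τ : ℕ) (p : ℝ) (x : ℤ) : ℝ :=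
  if |x| ≤ (τ : ℤ) ∧ x % 2 = (τ : ℤ) % 2 then
    (τ.choose (((τ : ℤ) + x) / 2).toNat : ℝ) * p ^ (((τ : ℤ) + x) / 2).toNat *
      (1 - p) ^ (((τ : ℤ) - x) / 2).toNat
  else 0

/-- Relative entropy (in nats) of probability mass functions on `ℤ` supported
in `[-τ, τ]`, with the convention `0 · ln 0 = 0`. -/
noncomputable def relEntZ (τ : ℕ) (P Q : ℤ → ℝ) : ℝ :=
  ∑ x ∈ Finset.Icc (-(τ : ℤ)) (τ : ℤ), P x * Real.log (P x / Q x)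

/-- The binary relative entropy `d(q ‖ p)`. -/
noncomputable def binRelEnt (q p : ℝ) : ℝ :=
  q * Real.log (q / p) + (1 - q) * Real.log ((1 - q) / (1 - p))

/-- Pythagorean identity: for a PMF `P` on `ℤ` supported in `S_τ` with first moment
`m ∈ (−τ, τ)` and `p* = 1/2 + m/(2τ)`, for every `p ∈ (0,1)` one has
`D(P ‖ Bin_{τ,p}) = D(P ‖ Bin_{τ,p*}) + τ · d(p* ‖ p)`. -/
theorem relEnt_pythagorean (τ : ℕ) (hτ : 1 ≤ τ) (P : ℤ → ℝ)
    (hP0 : ∀ x, 0 ≤ P x)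
    (hPsupp : ∀ x, P x ≠ 0 → |x| ≤ (τ : ℤ) ∧ x % 2 = (τ : ℤ) % 2)
    (hPsum : ∑ x ∈ Finset.Icc (-(τ : ℤ)) (τ : ℤ), P x = 1)
    (m : ℝ) (hm : m = ∑ x ∈ Finset.Icc (-(τ : ℤ)) (τ : ℤ), (x : ℝ) * P x)
    (hml : -(τ : ℝ) < m) (hmu : m < (τ : ℝ))
    (pstar : ℝ) (hpstar : pstar = 1 / 2 + m / (2 * τ))
    (p : ℝ) (hp : p ∈ Set.Ioo (0 : ℝ) 1) :
    relEntZ τ P (binPMF τ p) =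
      relEntZ τ P (binPMF τ pstar) + (τ : ℝ) * binRelEnt pstar p := by
  obtain ⟨hp0, hp1⟩ := hp
  have hτ0 : (0:ℝ) < τ := by exact_mod_cast hτ
  have h2τ : (0:ℝ) < 2 * τ := by positivity
  have hps0 : 0 < pstar := by
    have : -(1/2 : ℝ) < m / (2*τ) := by
      rw [lt_div_iff₀ h2τ]; linarith
    rw [hpstar]; linarith
  have hps1 : pstar < 1 := by
    have : m / (2*τ) < (1/2 : ℝ) := by
      rw [div_lt_iff₀ h2τ]; linarith
    rw [hpstar]; linarith
  -- the exponent
  set k : ℤ → ℕ := fun x => (((τ : ℤ) + x) / 2).toNat with hk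
  -- pointwise identity
  have key : ∀ x ∈ Finset.Icc (-(τ:ℤ)) (τ:ℤ),
      P x * Real.log (P x / binPMF τ p x)
        = P x * Real.log (P x / binPMF τ pstar x)
          + P x * ((k x : ℝ) * Real.log (pstar / p)
            + ((τ : ℝ) - (k x : ℝ)) * Real.log ((1 - pstar) / (1 - p))) := by
    intro x hx
    by_cases hPx : P x = 0
    · simp [hPx]
    · obtain ⟨hxb, hxm⟩ := hPsupp x hPx
      have hPxpos : 0 < P x := (hP0 x).lt_of_ne' hPx
      rw [abs_le] at hxb
      have hkle : k x ≤ τ := by simp only [hk]; omega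
      have hother : (((τ:ℤ) - x) / 2).toNat = τ - k x := by simp only [hk]; omega
      have hC : (0:ℝ) < (τ.choose (k x) : ℝ) := by
        exact_mod_cast Nat.choose_pos hkle
      have hbin : ∀ q : ℝ, binPMF τ q x = (τ.choose (k x) : ℝ) * q ^ (k x) * (1-q) ^ (τ - k x) := by
        intro q
        rw [binPMF, if_pos ⟨abs_le.mpr hxb, hxm⟩, hother]
      have hlog : ∀ q : ℝ, 0 < q → q < 1 →
          Real.log (P x / binPMF τ q x)
            = Real.log (P x) - Real.log (τ.choose (k x) : ℝ)
              - (k x : ℝ) * Real.log q - ((τ : ℝ) - (k x : ℝ)) * Real.log (1 - q) := by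
        intro q hq0 hq1
        have h1q : (0:ℝ) < 1 - q := by linarith
        rw [hbin q, Real.log_div hPx (by positivity), Real.log_mul (by positivity) (by positivity),
          Real.log_mul (by positivity) (by positivity), Real.log_pow, Real.log_pow]
        rw [Nat.cast_sub hkle]
        ring
      rw [hlog p hp0 hp1, hlog pstar hps0 hps1,
        Real.log_div (ne_of_gt hps0) (ne_of_gt hp0),
        Real.log_div (by linarith : (1:ℝ) - pstar ≠ 0) (by linarith : (1:ℝ) - p ≠ 0)]
      ring
  -- sum of P x * k x
  have hS1 : ∑ x ∈ Finset.Icc (-(τ:ℤ)) (τ:ℤ), P x * (k x : ℝ) = (τ : ℝ) * pstar := by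
    have step : ∀ x ∈ Finset.Icc (-(τ:ℤ)) (τ:ℤ),
        P x * (k x : ℝ) = ((τ:ℝ) * P x + (x:ℝ) * P x) / 2 := by
      intro x hx
      by_cases hPx : P x = 0
      · simp [hPx]
      · obtain ⟨hxb, hxm⟩ := hPsupp x hPx
        rw [abs_le] at hxb
        have h2k : ((k x : ℤ) : ℝ) * 2 = (τ : ℝ) + (x : ℝ) := by
          have : (k x : ℤ) * 2 = (τ : ℤ) + x := by simp only [hk]; omega
          exact_mod_cast congrArg (Int.cast : ℤ → ℝ) this
        push_cast at h2k
        have hke : (k x : ℝ) = ((τ:ℝ) + (x:ℝ)) / 2 := by linarith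
        rw [hke]; ring
    rw [Finset.sum_congr rfl step]
    simp only [← Finset.sum_div, Finset.sum_add_distrib, ← Finset.mul_sum]
    rw [hPsum, ← hm, hpstar]
    field_simp
  have h2 : ∑ x ∈ Finset.Icc (-(τ:ℤ)) (τ:ℤ),
      P x * ((k x : ℝ) * Real.log (pstar / p)
        + ((τ : ℝ) - (k x : ℝ)) * Real.log ((1 - pstar) / (1 - p)))
      = (τ : ℝ) * binRelEnt pstar p := by
    have e : ∀ x ∈ Finset.Icc (-(τ:ℤ)) (τ:ℤ),
        P x * ((k x : ℝ) * Real.log (pstar / p)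
          + ((τ : ℝ) - (k x : ℝ)) * Real.log ((1 - pstar) / (1 - p)))
        = Real.log (pstar / p) * (P x * (k x : ℝ))
          + Real.log ((1 - pstar) / (1 - p)) * ((τ : ℝ) * P x - P x * (k x : ℝ)) := by
      intro x hx; ring
    rw [Finset.sum_congr rfl e, Finset.sum_add_distrib, ← Finset.mul_sum,
      ← Finset.mul_sum, Finset.sum_sub_distrib, ← Finset.mul_sum, hPsum, hS1]
    unfold binRelEnt
    ring
  unfold relEntZ
  rw [Finset.sum_congr rfl key, Finset.sum_add_distrib, h2]
end

section
/- Let τ ≥ 1 be an integer and let P be a probability mass function on ℤ supported in S_τ, with first moment m = Σ_x x·P(x) satisfying −τ < m < τ, and set p* = 1/2 + m/(2τ). Then the quantumness Q = min_{p∈(0,1)} D(P ‖ Bin_{τ,p}) admits the closed form Q = D(P ‖ Bin_{τ,p*}) = D(P ‖ Bin_{τ,1/2}) − D(Bin_{τ,p*} ‖ Bin_{τ,1/2}), and moreover D(Bin_{τ,p*} ‖ Bin_{τ,1/2}) = τ·(ln 2 − H(p*)), where H(p) = −p·ln p − (1−p)·ln(1−p) is the binary entropy in nats. -/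
/-- The binary entropy `H(p) = −p·ln p − (1−p)·ln(1−p)` (in nats). -/
noncomputable def binEntropy' (p : ℝ) : ℝ :=
  -p * Real.log p - (1 - p) * Real.log (1 - p)

lemma binPMF_apply (τ k : ℕ) (hk : k ≤ τ) (p : ℝ) :
    binPMF τ p (2 * (k : ℤ) - τ) =
      (τ.choose k : ℝ) * p ^ k * (1 - p) ^ (τ - k) := by
  have h1 : (((τ : ℤ) + (2 * (k : ℤ) - τ)) / 2).toNat = k := by omega
  have h2 : (((τ : ℤ) - (2 * (k : ℤ) - τ)) / 2).toNat = τ - k := by omega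
  rw [binPMF, if_pos ⟨abs_le.mpr (by omega), by omega⟩, h1, h2]

lemma binPMF_nonneg (τ : ℕ) (p : ℝ) (hp0 : 0 ≤ p) (hp1 : p ≤ 1) (x : ℤ) :
    0 ≤ binPMF τ p x := by
  rw [binPMF]; split
  · have h1 : (0:ℝ) ≤ 1 - p := by linarith
    exact mul_nonneg (mul_nonneg (Nat.cast_nonneg _) (pow_nonneg hp0 _)) (pow_nonneg h1 _)
  · exact le_refl 0

lemma binPMF_supp (τ : ℕ) (p : ℝ) (x : ℤ) (h : binPMF τ p x ≠ 0) :
    |x| ≤ (τ : ℤ) ∧ x % 2 = (τ : ℤ) % 2 := by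
  by_contra hc
  exact h (if_neg hc)

lemma sum_cond (τ : ℕ) (f : ℤ → ℝ) :
    (∑ x ∈ Finset.Icc (-(τ : ℤ)) (τ : ℤ),
      if |x| ≤ (τ : ℤ) ∧ x % 2 = (τ : ℤ) % 2 then f x else 0) =
    ∑ k ∈ Finset.range (τ + 1), f (2 * (k : ℤ) - τ) := by
  rw [← Finset.sum_filter]
  refine Finset.sum_nbij' (fun x => (((τ : ℤ) + x) / 2).toNat)
    (fun k => 2 * (k : ℤ) - τ) ?_ ?_ ?_ ?_ ?_
  · intro x hx
    simp only [Finset.mem_filter, Finset.mem_Icc, abs_le] at hx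
    simp only [Finset.mem_range]
    omega
  · intro k hk
    simp only [Finset.mem_range] at hk
    simp only [Finset.mem_filter, Finset.mem_Icc, abs_le]
    omega
  · intro x hx
    simp only [Finset.mem_filter, Finset.mem_Icc, abs_le] at hx
    beta_reduce
    omega
  · intro k hk
    simp only [Finset.mem_range] at hk
    beta_reduce
    omega
  · intro x hx
    simp only [Finset.mem_filter, Finset.mem_Icc, abs_le] at hx
    beta_reduce
    congr 1
    omega

lemma sum_cond' (τ : ℕ) (g : ℤ → ℝ)
    (h0 : ∀ x, ¬(|x| ≤ (τ : ℤ) ∧ x % 2 = (τ : ℤ) % 2) → g x = 0) :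
    (∑ x ∈ Finset.Icc (-(τ : ℤ)) (τ : ℤ), g x) =
    ∑ k ∈ Finset.range (τ + 1), g (2 * (k : ℤ) - τ) := by
  rw [← sum_cond τ g]
  refine Finset.sum_congr rfl fun x _ => ?_
  split
  · rfl
  · exact h0 x (by assumption)

lemma bin_sum (n : ℕ) (p q : ℝ) :
    ∑ k ∈ Finset.range (n + 1), (n.choose k : ℝ) * p ^ k * q ^ (n - k)
      = (p + q) ^ n := by
  rw [add_pow]
  exact Finset.sum_congr rfl fun k _ => by ring

lemma bin_mean (n : ℕ) (p q : ℝ) :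
    ∑ k ∈ Finset.range (n + 1), (k : ℝ) * (n.choose k : ℝ) * p ^ k * q ^ (n - k)
      = n * p * (p + q) ^ (n - 1) := by
  cases n with
  | zero => simp
  | succ m =>
    rw [Finset.sum_range_succ']
    simp only [Nat.cast_zero, zero_mul, add_zero]
    have key : ∀ k ∈ Finset.range (m + 1),
        ((k + 1 : ℕ) : ℝ) * ((m + 1).choose (k + 1) : ℝ) * p ^ (k + 1) * q ^ (m + 1 - (k + 1))
          = ((m + 1 : ℕ) : ℝ) * p * ((m.choose k : ℝ) * p ^ k * q ^ (m - k)) := by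
      intro k hk
      have h : ((m + 1).choose (k + 1) : ℝ) * ((k + 1 : ℕ) : ℝ)
          = ((m + 1 : ℕ) : ℝ) * (m.choose k : ℝ) := by
        rw [← Nat.cast_mul, ← Nat.cast_mul, ← Nat.add_one_mul_choose_eq]
      have h2 : m + 1 - (k + 1) = m - k := by omega
      rw [h2]
      linear_combination (p ^ (k + 1) * q ^ (m - k)) * h
    rw [Finset.sum_congr rfl key, ← Finset.mul_sum, bin_sum]
    simp

lemma sum_binPMF (τ : ℕ) (p : ℝ) :
    ∑ x ∈ Finset.Icc (-(τ : ℤ)) (τ : ℤ), binPMF τ p x = 1 := by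
  rw [sum_cond' τ (binPMF τ p) (fun x hx => if_neg hx)]
  have : ∀ k ∈ Finset.range (τ + 1), binPMF τ p (2 * (k : ℤ) - τ)
      = (τ.choose k : ℝ) * p ^ k * (1 - p) ^ (τ - k) := by
    intro k hk
    exact binPMF_apply τ k (by simpa using Nat.lt_succ_iff.mp (Finset.mem_range.mp hk)) p
  rw [Finset.sum_congr rfl this, bin_sum]
  norm_num

lemma mean_binPMF (τ : ℕ) (p : ℝ) :
    ∑ x ∈ Finset.Icc (-(τ : ℤ)) (τ : ℤ), ((x : ℝ) * binPMF τ p x)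
      = 2 * τ * p - τ := by
  rw [sum_cond' τ (fun x => (x:ℝ) * binPMF τ p x) (fun x hx => by simp only [binPMF, if_neg hx, mul_zero])]
  have : ∀ k ∈ Finset.range (τ + 1), ((2 * (k : ℤ) - τ : ℤ) : ℝ) * binPMF τ p (2 * (k : ℤ) - τ)
      = 2 * ((k : ℝ) * (τ.choose k : ℝ) * p ^ k * (1 - p) ^ (τ - k))
        - (τ : ℝ) * ((τ.choose k : ℝ) * p ^ k * (1 - p) ^ (τ - k)) := by
    intro k hk
    rw [binPMF_apply τ k (Nat.lt_succ_iff.mp (Finset.mem_range.mp hk)) p]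
    push_cast
    ring
  rw [Finset.sum_congr rfl this, Finset.sum_sub_distrib, ← Finset.mul_sum, ← Finset.mul_sum,
    bin_sum, bin_mean]
  norm_num
  ring

noncomputable def Aconst (τ : ℕ) (P : ℤ → ℝ) : ℝ :=
  ∑ x ∈ Finset.Icc (-(τ : ℤ)) (τ : ℤ),
    P x * Real.log (P x / (τ.choose (((τ : ℤ) + x) / 2).toNat : ℝ))

lemma relEntZ_self (τ : ℕ) (Q : ℤ → ℝ) : relEntZ τ Q Q = 0 := by
  rw [relEntZ]
  refine Finset.sum_eq_zero fun x _ => ?_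
  by_cases h : Q x = 0
  · rw [h, zero_mul]
  · rw [div_self h, Real.log_one, mul_zero]

lemma relEnt_eq (τ : ℕ) (P : ℤ → ℝ) (hP0 : ∀ x, 0 ≤ P x)
    (hPsupp : ∀ x, P x ≠ 0 → |x| ≤ (τ : ℤ) ∧ x % 2 = (τ : ℤ) % 2)
    (hPsum : ∑ x ∈ Finset.Icc (-(τ : ℤ)) (τ : ℤ), P x = 1)
    (m : ℝ) (hm : m = ∑ x ∈ Finset.Icc (-(τ : ℤ)) (τ : ℤ), (x : ℝ) * P x)
    (p : ℝ) (hp0 : 0 < p) (hp1 : p < 1) :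
    relEntZ τ P (binPMF τ p) =
      Aconst τ P - ((τ : ℝ) + m) / 2 * Real.log p
        - ((τ : ℝ) - m) / 2 * Real.log (1 - p) := by
  have hq : (0:ℝ) < 1 - p := by linarith
  have key : ∀ x ∈ Finset.Icc (-(τ : ℤ)) (τ : ℤ),
      P x * Real.log (P x / binPMF τ p x) =
        P x * Real.log (P x / (τ.choose (((τ : ℤ) + x) / 2).toNat : ℝ))
          - ((τ : ℝ) + (x : ℝ)) / 2 * P x * Real.log p
          - ((τ : ℝ) - (x : ℝ)) / 2 * P x * Real.log (1 - p) := by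
    intro x _
    by_cases hPx : P x = 0
    · simp [hPx]
    obtain ⟨hx1, hx2⟩ := hPsupp x hPx
    have hPxpos : 0 < P x := lt_of_le_of_ne (hP0 x) (Ne.symm hPx)
    set a := (((τ : ℤ) + x) / 2).toNat with ha
    set b := (((τ : ℤ) - x) / 2).toNat with hb
    have hxτ : -(τ:ℤ) ≤ x ∧ x ≤ (τ:ℤ) := abs_le.mp hx1
    have haZ : (2:ℤ) * (a : ℤ) = (τ:ℤ) + x := by omega
    have hbZ : (2:ℤ) * (b : ℤ) = (τ:ℤ) - x := by omega
    have haR : (a : ℝ) = ((τ : ℝ) + (x : ℝ)) / 2 := by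
      have := congrArg (fun z : ℤ => (z : ℝ)) haZ
      push_cast at this
      linarith
    have hbR : (b : ℝ) = ((τ : ℝ) - (x : ℝ)) / 2 := by
      have := congrArg (fun z : ℤ => (z : ℝ)) hbZ
      push_cast at this
      linarith
    have haτ : a ≤ τ := by omega
    have hC : (0:ℝ) < (τ.choose a : ℝ) := by
      exact_mod_cast Nat.choose_pos haτ
    have hbin : binPMF τ p x = (τ.choose a : ℝ) * p ^ a * (1 - p) ^ b := by
      rw [binPMF, if_pos ⟨hx1, hx2⟩]
    rw [hbin]
    have e1 : Real.log (P x / ((τ.choose a : ℝ) * p ^ a * (1 - p) ^ b)) =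
        Real.log (P x / (τ.choose a : ℝ)) - (a : ℝ) * Real.log p
          - (b : ℝ) * Real.log (1 - p) := by
      rw [Real.log_div hPx (by positivity), Real.log_div hPx hC.ne',
        Real.log_mul (by positivity) (by positivity),
        Real.log_mul hC.ne' (by positivity), Real.log_pow, Real.log_pow]
      ring
    rw [e1, haR, hbR]
    ring
  rw [relEntZ, Finset.sum_congr rfl key]
  rw [Finset.sum_sub_distrib, Finset.sum_sub_distrib, ← Aconst]
  congr 1
  · congr 1
    rw [← Finset.sum_mul]
    congr 1
    have : ∀ x ∈ Finset.Icc (-(τ : ℤ)) (τ : ℤ),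
        ((τ : ℝ) + (x : ℝ)) / 2 * P x = ((τ : ℝ) * P x + (x : ℝ) * P x) / 2 := by
      intro x _; ring
    rw [Finset.sum_congr rfl this, ← Finset.sum_div, Finset.sum_add_distrib,
      ← Finset.mul_sum, hPsum, ← hm, mul_one]
  · rw [← Finset.sum_mul]
    congr 1
    have : ∀ x ∈ Finset.Icc (-(τ : ℤ)) (τ : ℤ),
        ((τ : ℝ) - (x : ℝ)) / 2 * P x = ((τ : ℝ) * P x - (x : ℝ) * P x) / 2 := by
      intro x _; ring
    rw [Finset.sum_congr rfl this, ← Finset.sum_div, Finset.sum_sub_distrib,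
      ← Finset.mul_sum, hPsum, ← hm, mul_one]

lemma gibbs (a b : ℝ) (ha0 : 0 < a) (ha1 : a < 1) (hb0 : 0 < b) (hb1 : b < 1) :
    a * Real.log b + (1 - a) * Real.log (1 - b) ≤
      a * Real.log a + (1 - a) * Real.log (1 - a) := by
  have h1 : Real.log (b / a) ≤ b / a - 1 := Real.log_le_sub_one_of_pos (div_pos hb0 ha0)
  have h2 : Real.log ((1 - b) / (1 - a)) ≤ (1 - b) / (1 - a) - 1 :=
    Real.log_le_sub_one_of_pos (div_pos (by linarith) (by linarith))
  have hb' : (0:ℝ) < 1 - b := by linarith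
  have ha' : (0:ℝ) < 1 - a := by linarith
  rw [Real.log_div hb0.ne' ha0.ne'] at h1
  rw [Real.log_div hb'.ne' ha'.ne'] at h2
  have e1 : a * (b / a - 1) = b - a := by field_simp
  have e2 : (1 - a) * ((1 - b) / (1 - a) - 1) = a - b := by
    field_simp
    ring
  nlinarith [mul_le_mul_of_nonneg_left h1 ha0.le,
    mul_le_mul_of_nonneg_left h2 (by linarith : (0:ℝ) ≤ 1 - a)]

/-- Closed form for the quantumness: `Q = min_{p∈(0,1)} D(P ‖ Bin_{τ,p})` is attained
at `p* = 1/2 + m/(2τ)`, and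
`Q = D(P ‖ Bin_{τ,p*}) = D(P ‖ Bin_{τ,1/2}) − D(Bin_{τ,p*} ‖ Bin_{τ,1/2})`,
with `D(Bin_{τ,p*} ‖ Bin_{τ,1/2}) = τ·(ln 2 − H(p*))`. -/
theorem quantumness_closed_form (τ : ℕ) (hτ : 1 ≤ τ) (P : ℤ → ℝ)
    (hP0 : ∀ x, 0 ≤ P x)
    (hPsupp : ∀ x, P x ≠ 0 → |x| ≤ (τ : ℤ) ∧ x % 2 = (τ : ℤ) % 2)
    (hPsum : ∑ x ∈ Finset.Icc (-(τ : ℤ)) (τ : ℤ), P x = 1)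
    (m : ℝ) (hm : m = ∑ x ∈ Finset.Icc (-(τ : ℤ)) (τ : ℤ), (x : ℝ) * P x)
    (hml : -(τ : ℝ) < m) (hmu : m < (τ : ℝ))
    (pstar : ℝ) (hpstar : pstar = 1 / 2 + m / (2 * τ)) :
    IsLeast {r : ℝ | ∃ p ∈ Set.Ioo (0 : ℝ) 1, r = relEntZ τ P (binPMF τ p)}
        (relEntZ τ P (binPMF τ pstar)) ∧
    relEntZ τ P (binPMF τ pstar) =
        relEntZ τ P (binPMF τ (1 / 2)) -
          relEntZ τ (binPMF τ pstar) (binPMF τ (1 / 2)) ∧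
    relEntZ τ (binPMF τ pstar) (binPMF τ (1 / 2)) =
        (τ : ℝ) * (Real.log 2 - binEntropy' pstar) := by
  have hτR : (0:ℝ) < τ := by exact_mod_cast hτ
  have hps : pstar = ((τ:ℝ) + m) / (2 * τ) := by
    rw [hpstar]; field_simp
  have hps0 : 0 < pstar := by
    rw [hps]; exact div_pos (by linarith) (by linarith)
  have hps1 : pstar < 1 := by
    rw [hps, div_lt_one (by linarith)]; linarith
  have hplus : ((τ:ℝ) + m) / 2 = (τ:ℝ) * pstar := by
    rw [hps]; field_simp
  have hminus : ((τ:ℝ) - m) / 2 = (τ:ℝ) * (1 - pstar) := by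
    rw [hps]; field_simp; ring
  have EP : ∀ p : ℝ, 0 < p → p < 1 → relEntZ τ P (binPMF τ p) =
      Aconst τ P - (τ:ℝ) * pstar * Real.log p
        - (τ:ℝ) * (1 - pstar) * Real.log (1 - p) := fun p h0 h1 => by
    rw [relEnt_eq τ P hP0 hPsupp hPsum m hm p h0 h1, hplus, hminus]
  have hQ0 : ∀ x, 0 ≤ binPMF τ pstar x := binPMF_nonneg τ pstar hps0.le hps1.le
  have hQsum := sum_binPMF τ pstar
  have hQm : m = ∑ x ∈ Finset.Icc (-(τ : ℤ)) (τ : ℤ), (x:ℝ) * binPMF τ pstar x := by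
    rw [mean_binPMF, hps]
    field_simp
    ring
  have EQ : ∀ p : ℝ, 0 < p → p < 1 → relEntZ τ (binPMF τ pstar) (binPMF τ p) =
      Aconst τ (binPMF τ pstar) - (τ:ℝ) * pstar * Real.log p
        - (τ:ℝ) * (1 - pstar) * Real.log (1 - p) := fun p h0 h1 => by
    rw [relEnt_eq τ (binPMF τ pstar) hQ0 (binPMF_supp τ pstar) hQsum m hQm p h0 h1,
      hplus, hminus]
  have AQ : Aconst τ (binPMF τ pstar) =
      (τ:ℝ) * pstar * Real.log pstar + (τ:ℝ) * (1 - pstar) * Real.log (1 - pstar) := by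
    have h := EQ pstar hps0 hps1
    rw [relEntZ_self] at h
    linarith
  have h12 : (1:ℝ) - 1/2 = 1/2 := by norm_num
  have hl : Real.log ((1:ℝ)/2) = -Real.log 2 := by rw [one_div, Real.log_inv]
  have hhalf : relEntZ τ (binPMF τ pstar) (binPMF τ (1/2)) =
      (τ : ℝ) * (Real.log 2 - binEntropy' pstar) := by
    rw [EQ (1/2) (by norm_num) (by norm_num), AQ, h12, hl, binEntropy']
    ring
  refine ⟨⟨⟨pstar, ⟨hps0, hps1⟩, rfl⟩, ?_⟩, ?_, hhalf⟩
  · rintro r ⟨p, ⟨hp0, hp1⟩, rfl⟩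
    rw [EP p hp0 hp1, EP pstar hps0 hps1]
    have g := gibbs pstar p hps0 hps1 hp0 hp1
    nlinarith [mul_le_mul_of_nonneg_left g hτR.le]
  · rw [EP pstar hps0 hps1, EP (1/2) (by norm_num) (by norm_num), hhalf, h12, hl,
      binEntropy']
    ring
end

section
/- Let τ ≥ 1 be an integer and let ρ be a positive definite Hermitian complex density matrix (Tr ρ = 1) indexed by the lattice S_τ, with diagonal probability distribution P(x) = ρ_xx and first moment m = Σ_{x∈S_τ} x·ρ_xx satisfying −τ < m < τ. For p ∈ (0,1) let σ_p be the diagonal matrix with entries Bin_{τ,p}(x), x ∈ S_τ. Then for every p ∈ (0,1), S(ρ ‖ σ_p) = D(P ‖ Bin_{τ,p}) + C(ρ); consequently min_{p∈(0,1)} S(ρ ‖ σ_p) = min_{p∈(0,1)} D(P ‖ Bin_{τ,p}) + C(ρ), both minima are attained at the same unique point p = p* := 1/2 + m/(2τ), and the total quantumness 𝒬 := min_p S(ρ ‖ σ_p) equals Q + C(ρ) where Q := min_p D(P ‖ Bin_{τ,p}). -/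
open scoped ComplexOrder

/-- The lattice `S_τ = {x ∈ ℤ : |x| ≤ τ and x ≡ τ (mod 2)}` as a finset. -/
noncomputable def latticeFinset (τ : ℕ) : Finset ℤ :=
  (Finset.Icc (-(τ : ℤ)) (τ : ℤ)).filter (fun x => x % 2 = (τ : ℤ) % 2)

/-- The matrix logarithm of a Hermitian matrix via the functional calculus
(junk value `0` on non-Hermitian matrices). -/
noncomputable def matLog {n : Type*} [Fintype n] [DecidableEq n]
    (ρ : Matrix n n ℂ) : Matrix n n ℂ :=
  if h : ρ.IsHermitian then
    (h.eigenvectorUnitary : Matrix n n ℂ) *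
      Matrix.diagonal (fun i => (Real.log (h.eigenvalues i) : ℂ)) *
      star (h.eigenvectorUnitary : Matrix n n ℂ)
  else 0

/-- The classical random-walk density matrix `σ_p`, diagonal with entries
`Bin_{τ,p}(x)`, `x ∈ S_τ`. -/
noncomputable def binDiag (τ : ℕ) (p : ℝ) :
    Matrix (latticeFinset τ) (latticeFinset τ) ℂ :=
  Matrix.diagonal (fun x => (binPMF τ p (x : ℤ) : ℂ))

/-- Classical relative entropy `D(P ‖ Bin_{τ,p})` of the diagonal distribution
`P(x) = ρ_xx` of `ρ` with respect to the binomial distribution. -/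
noncomputable def diagRelEnt (τ : ℕ)
    (ρ : Matrix (latticeFinset τ) (latticeFinset τ) ℂ) (p : ℝ) : ℝ :=
  ∑ x : latticeFinset τ, (ρ x x).re * Real.log ((ρ x x).re / binPMF τ p (x : ℤ))

/-- Relative entropy of coherence `C(ρ) = H(diag ρ) − S(ρ)` in the position basis. -/
noncomputable def cohRelEnt (τ : ℕ)
    (ρ : Matrix (latticeFinset τ) (latticeFinset τ) ℂ) : ℝ :=
  (-∑ x : latticeFinset τ, (ρ x x).re * Real.log (ρ x x).re) -
    (-(ρ * matLog ρ).trace.re)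

/-- Quantum relative entropy `S(ρ ‖ σ_p) = Tr[ρ(log ρ − log σ_p)]` (real part). -/
noncomputable def qRelEnt (τ : ℕ)
    (ρ : Matrix (latticeFinset τ) (latticeFinset τ) ℂ) (p : ℝ) : ℝ :=
  ((ρ * (matLog ρ - matLog (binDiag τ p))).trace).re


/-! ### Auxiliary lemmas -/

lemma aux_matLog_diagonal {n : Type*} [Fintype n] [DecidableEq n] (d : n → ℝ) :
    matLog (Matrix.diagonal (fun i => (d i : ℂ))) =
      Matrix.diagonal (fun i => (Real.log (d i) : ℂ)) := by
  have h : (Matrix.diagonal (fun i => (d i : ℂ))).IsHermitian := by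
    ext i j
    rw [Matrix.conjTranspose_apply]
    by_cases hij : j = i
    · subst hij; simp [Matrix.diagonal_apply_eq, Complex.conj_ofReal]
    · simp [Matrix.diagonal_apply_ne _ hij, Matrix.diagonal_apply_ne' _ hij]
  rw [matLog, dif_pos h]
  set U : Matrix n n ℂ := (h.eigenvectorUnitary : Matrix n n ℂ) with hU
  have hUU : U * star U = 1 := (Matrix.mem_unitaryGroup_iff).mp h.eigenvectorUnitary.2
  have hsU : star U * U = 1 := (Matrix.mem_unitaryGroup_iff').mp h.eigenvectorUnitary.2
  have hspec := h.spectral_theorem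
  have hAU : Matrix.diagonal (fun i => (d i : ℂ)) * U =
      U * Matrix.diagonal (RCLike.ofReal ∘ h.eigenvalues) := by
    conv_lhs => rw [hspec, Unitary.conjStarAlgAut_apply]; simp only [Unitary.coe_star]
    rw [Matrix.mul_assoc, Matrix.mul_assoc, hsU, Matrix.mul_one]
  have key : ∀ x i, (d x : ℂ) * U x i = U x i * (h.eigenvalues i : ℂ) := by
    intro x i
    have := congrFun (congrFun hAU x) i
    simpa [Matrix.diagonal_mul, Matrix.mul_diagonal] using this
  have main : Matrix.diagonal (fun i => (Real.log (d i) : ℂ)) * U =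
      U * Matrix.diagonal (fun i => (Real.log (h.eigenvalues i) : ℂ)) := by
    ext x i
    simp only [Matrix.diagonal_mul, Matrix.mul_diagonal]
    rcases eq_or_ne (U x i) 0 with h0 | h0
    · simp [h0]
    · have hc : (d x : ℂ) = (h.eigenvalues i : ℂ) := by
        have := key x i
        rw [mul_comm (U x i) _] at this
        exact mul_right_cancel₀ h0 this
      have : d x = h.eigenvalues i := by exact_mod_cast hc
      rw [this, mul_comm]
  rw [← main, Matrix.mul_assoc, hUU, Matrix.mul_one]

lemma aux_posdef_diag_pos {n : Type*} [Fintype n] [DecidableEq n]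
    {ρ : Matrix n n ℂ} (hρ : ρ.PosDef) (i : n) : 0 < (ρ i i).re := by
  have := hρ.re_dotProduct_pos (x := Pi.single i 1) (by
    intro h; have := congrFun h i; simp at this)
  simp only [Matrix.mulVec_single, dotProduct, Pi.single_apply, star,
    Complex.add_re, Complex.mul_re] at this
  simpa [Finset.sum_ite_eq', apply_ite] using this

lemma aux_herm_diag_real {n : Type*} [Fintype n] [DecidableEq n]
    {ρ : Matrix n n ℂ} (h : ρ.IsHermitian) (i : n) : ρ i i = ((ρ i i).re : ℂ) :=
  (h.coe_re_apply_self i).symm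

lemma aux_trace_mul_diagonal {n : Type*} [Fintype n] [DecidableEq n]
    (ρ : Matrix n n ℂ) (c : n → ℂ) :
    (ρ * Matrix.diagonal c).trace = ∑ i, ρ i i * c i := by
  simp [Matrix.trace, Matrix.diag, Matrix.mul_diagonal]

lemma aux_trace_mul_matLog_self {n : Type*} [Fintype n] [DecidableEq n]
    (ρ : Matrix n n ℂ) (h : ρ.IsHermitian) :
    (ρ * matLog ρ).trace =
      ((∑ i, h.eigenvalues i * Real.log (h.eigenvalues i) : ℝ) : ℂ) := by
  rw [matLog, dif_pos h]
  set U : Matrix n n ℂ := (h.eigenvectorUnitary : Matrix n n ℂ) with hUdef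
  have hsU : star U * U = 1 := (Matrix.mem_unitaryGroup_iff').mp h.eigenvectorUnitary.2
  set L := Matrix.diagonal (fun i => (Real.log (h.eigenvalues i) : ℂ)) with hL
  have hmm : ρ * (U * L * star U) =
      U * (Matrix.diagonal (RCLike.ofReal ∘ h.eigenvalues) * L) * star U := by
    conv_lhs => rw [h.spectral_theorem, Unitary.conjStarAlgAut_apply]; simp only [Unitary.coe_star]
    simp only [Matrix.mul_assoc]
    rw [← Matrix.mul_assoc (star U) U, hsU, Matrix.one_mul]
  rw [hmm, Matrix.trace_mul_cycle, ← Matrix.mul_assoc, hsU, Matrix.one_mul, hL,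
    Matrix.diagonal_mul_diagonal, Matrix.trace_diagonal]
  push_cast
  rfl

lemma aux_mem_lattice {τ : ℕ} {x : ℤ} (hx : x ∈ latticeFinset τ) :
    |x| ≤ (τ : ℤ) ∧ x % 2 = (τ : ℤ) % 2 := by
  simp only [latticeFinset, Finset.mem_filter, Finset.mem_Icc] at hx
  exact ⟨abs_le.mpr ⟨hx.1.1, hx.1.2⟩, hx.2⟩

lemma aux_lattice_arith (τ : ℕ) {x : ℤ} (h1 : |x| ≤ (τ : ℤ)) (h2 : x % 2 = (τ : ℤ) % 2) :
    ((((τ : ℤ) + x) / 2).toNat : ℤ) * 2 = (τ : ℤ) + x ∧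
    ((((τ : ℤ) - x) / 2).toNat : ℤ) * 2 = (τ : ℤ) - x ∧
    (((τ : ℤ) + x) / 2).toNat ≤ τ := by
  rw [abs_le] at h1; omega

lemma aux_binPMF_pos {τ : ℕ} {p : ℝ} {x : ℤ} (hp : 0 < p) (hp1 : p < 1)
    (hx : x ∈ latticeFinset τ) : 0 < binPMF τ p x := by
  obtain ⟨h1, h2⟩ := aux_mem_lattice hx
  obtain ⟨-, -, hk⟩ := aux_lattice_arith τ h1 h2
  rw [binPMF, if_pos ⟨h1, h2⟩]
  have h1p : 0 < (1 : ℝ) - p := by linarith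
  exact mul_pos (mul_pos (by exact_mod_cast Nat.choose_pos hk) (pow_pos hp _))
    (pow_pos h1p _)

lemma aux_log_binPMF {τ : ℕ} {p : ℝ} {x : ℤ} (hp : 0 < p) (hp1 : p < 1)
    (hx : x ∈ latticeFinset τ) :
    Real.log (binPMF τ p x) =
      Real.log (τ.choose (((τ : ℤ) + x) / 2).toNat : ℝ) +
      ((((τ : ℤ) + x) / 2).toNat : ℝ) * Real.log p +
      ((((τ : ℤ) - x) / 2).toNat : ℝ) * Real.log (1 - p) := by
  obtain ⟨h1, h2⟩ := aux_mem_lattice hx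
  obtain ⟨-, -, hk⟩ := aux_lattice_arith τ h1 h2
  have hc : (0 : ℝ) < (τ.choose (((τ : ℤ) + x) / 2).toNat : ℝ) := by
    exact_mod_cast Nat.choose_pos hk
  have h1p : (0 : ℝ) < 1 - p := by linarith
  rw [binPMF, if_pos ⟨h1, h2⟩, Real.log_mul (by positivity) (by positivity),
    Real.log_mul hc.ne' (by positivity), Real.log_pow, Real.log_pow]

lemma aux_bern_pos {a b : ℝ} (ha : 0 < a) (ha1 : a < 1) (hb : 0 < b) (hb1 : b < 1)
    (hne : b ≠ a) :
    0 < a * (Real.log a - Real.log b) +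
      (1 - a) * (Real.log (1 - a) - Real.log (1 - b)) := by
  have h1a : (0:ℝ) < 1 - a := by linarith
  have h1b : (0:ℝ) < 1 - b := by linarith
  have e1 : Real.log (b / a) < b / a - 1 :=
    Real.log_lt_sub_one_of_pos (div_pos hb ha) (by
      intro h; exact hne (by field_simp at h; linarith))
  have e2 : Real.log ((1 - b) / (1 - a)) < (1 - b) / (1 - a) - 1 :=
    Real.log_lt_sub_one_of_pos (div_pos h1b h1a) (by
      intro h; exact hne (by field_simp at h; linarith))
  rw [Real.log_div hb.ne' ha.ne'] at e1
  rw [Real.log_div h1b.ne' h1a.ne'] at e2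
  have f1 := mul_lt_mul_of_pos_left e1 ha
  have f2 := mul_lt_mul_of_pos_left e2 h1a
  rw [mul_sub a (b / a) 1, mul_div_cancel₀ b ha.ne'] at f1
  rw [mul_sub (1 - a) ((1 - b) / (1 - a)) 1, mul_div_cancel₀ (1 - b) h1a.ne'] at f2
  nlinarith

lemma aux_bern_nonneg {a b : ℝ} (ha : 0 < a) (ha1 : a < 1) (hb : 0 < b) (hb1 : b < 1) :
    0 ≤ a * (Real.log a - Real.log b) +
      (1 - a) * (Real.log (1 - a) - Real.log (1 - b)) := by
  rcases eq_or_ne b a with rfl | hne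
  · simp
  · exact (aux_bern_pos ha ha1 hb hb1 hne).le

/-- Total quantumness theorem: for a faithful density matrix `ρ` on the lattice
`S_τ` with diagonal distribution `P` and first moment `m ∈ (−τ,τ)`, for every
`p ∈ (0,1)` one has `S(ρ ‖ σ_p) = D(P ‖ Bin_{τ,p}) + C(ρ)`; both minima over
`p ∈ (0,1)` are attained at the same unique point `p* = 1/2 + m/(2τ)`, and the
total quantumness `𝒬 = min_p S(ρ ‖ σ_p)` equals `Q + C(ρ)` with
`Q = min_p D(P ‖ Bin_{τ,p})`. -/
theorem total_quantumness (τ : ℕ) (hτ : 1 ≤ τ)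
    (ρ : Matrix (latticeFinset τ) (latticeFinset τ) ℂ)
    (hρ : ρ.PosDef) (htr : ρ.trace = 1)
    (m : ℝ) (hm : m = ∑ x : latticeFinset τ, ((x : ℤ) : ℝ) * (ρ x x).re)
    (hml : -(τ : ℝ) < m) (hmu : m < (τ : ℝ))
    (pstar : ℝ) (hpstar : pstar = 1 / 2 + m / (2 * τ)) :
    (∀ p ∈ Set.Ioo (0 : ℝ) 1,
        (ρ * (matLog ρ - matLog (binDiag τ p))).trace =
          ((diagRelEnt τ ρ p + cohRelEnt τ ρ : ℝ) : ℂ)) ∧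
    pstar ∈ Set.Ioo (0 : ℝ) 1 ∧
    IsLeast {r : ℝ | ∃ p ∈ Set.Ioo (0 : ℝ) 1, r = qRelEnt τ ρ p}
      (qRelEnt τ ρ pstar) ∧
    IsLeast {r : ℝ | ∃ p ∈ Set.Ioo (0 : ℝ) 1, r = diagRelEnt τ ρ p}
      (diagRelEnt τ ρ pstar) ∧
    (∀ p ∈ Set.Ioo (0 : ℝ) 1, qRelEnt τ ρ p = qRelEnt τ ρ pstar → p = pstar) ∧
    (∀ p ∈ Set.Ioo (0 : ℝ) 1,
        diagRelEnt τ ρ p = diagRelEnt τ ρ pstar → p = pstar) ∧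
    qRelEnt τ ρ pstar = diagRelEnt τ ρ pstar + cohRelEnt τ ρ := by
  have hherm := hρ.1
  have hτR : (0:ℝ) < τ := by exact_mod_cast Nat.pos_of_ne_zero (by omega)
  have h2τ : (0:ℝ) < 2 * τ := by linarith
  have hq0 : 0 < pstar := by
    rw [hpstar]
    have : -(1/2:ℝ) < m / (2*τ) := by rw [lt_div_iff₀ h2τ]; linarith
    linarith
  have hq1 : pstar < 1 := by
    rw [hpstar]
    have : m / (2*τ) < 1/2 := by rw [div_lt_iff₀ h2τ]; linarith
    linarith
  have hPpos : ∀ x : latticeFinset τ, 0 < (ρ x x).re := fun x => aux_posdef_diag_pos hρ x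
  have hPre : ∀ x : latticeFinset τ, ρ x x = ((ρ x x).re : ℂ) :=
    fun x => aux_herm_diag_real hherm x
  have hsum1 : ∑ x : latticeFinset τ, (ρ x x).re = 1 := by
    have h := congrArg Complex.re htr
    rw [Matrix.trace] at h
    simpa [Matrix.diag, Complex.re_sum] using h
  -- the step-count functions
  set kf : latticeFinset τ → ℕ := fun x => (((τ:ℤ) + (x:ℤ)) / 2).toNat with hkf
  set jf : latticeFinset τ → ℕ := fun x => (((τ:ℤ) - (x:ℤ)) / 2).toNat with hjf
  have hk2 : ∀ x : latticeFinset τ, ((kf x : ℝ)) * 2 = (τ:ℝ) + ((x:ℤ):ℝ) := by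
    intro x
    have h := (aux_lattice_arith τ (aux_mem_lattice x.2).1 (aux_mem_lattice x.2).2).1
    exact_mod_cast h
  have hj2 : ∀ x : latticeFinset τ, ((jf x : ℝ)) * 2 = (τ:ℝ) - ((x:ℤ):ℝ) := by
    intro x
    have h := (aux_lattice_arith τ (aux_mem_lattice x.2).1 (aux_mem_lattice x.2).2).2.1
    exact_mod_cast h
  have hA : ∑ x : latticeFinset τ, (ρ x x).re * (kf x : ℝ) = (τ:ℝ) * pstar := by
    have e : ∀ x ∈ Finset.univ, (ρ x x).re * (kf x : ℝ) =
        ((τ:ℝ) * (ρ x x).re + ((x:ℤ):ℝ) * (ρ x x).re)/2 := by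
      intro x _
      have hkx : (kf x : ℝ) = ((τ:ℝ) + ((x:ℤ):ℝ))/2 := by linarith [hk2 x]
      rw [hkx]; ring
    rw [Finset.sum_congr rfl e, ← Finset.sum_div, Finset.sum_add_distrib,
      ← Finset.mul_sum, hsum1, ← hm, hpstar]
    field_simp
  have hB : ∑ x : latticeFinset τ, (ρ x x).re * (jf x : ℝ) = (τ:ℝ) * (1 - pstar) := by
    have e : ∀ x ∈ Finset.univ, (ρ x x).re * (jf x : ℝ) =
        ((τ:ℝ) * (ρ x x).re - ((x:ℤ):ℝ) * (ρ x x).re)/2 := by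
      intro x _
      have hjx : (jf x : ℝ) = ((τ:ℝ) - ((x:ℤ):ℝ))/2 := by linarith [hj2 x]
      rw [hjx]; ring
    rw [Finset.sum_congr rfl e, ← Finset.sum_div, Finset.sum_sub_distrib,
      ← Finset.mul_sum, hsum1, ← hm, hpstar]
    field_simp
    ring
  have hD : ∀ p : ℝ, 0 < p → p < 1 → diagRelEnt τ ρ p =
      (∑ x : latticeFinset τ, (ρ x x).re *
        (Real.log (ρ x x).re - Real.log (τ.choose (kf x) : ℝ)))
      - ((τ:ℝ) * pstar) * Real.log p - ((τ:ℝ) * (1 - pstar)) * Real.log (1 - p) := by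
    intro p hp hp1
    rw [diagRelEnt]
    have e : ∀ x ∈ Finset.univ, (ρ x x).re * Real.log ((ρ x x).re / binPMF τ p (x:ℤ)) =
        (ρ x x).re * (Real.log (ρ x x).re - Real.log (τ.choose (kf x) : ℝ))
          - ((ρ x x).re * (kf x : ℝ)) * Real.log p
          - ((ρ x x).re * (jf x : ℝ)) * Real.log (1 - p) := by
      intro x _
      rw [Real.log_div (hPpos x).ne' (aux_binPMF_pos hp hp1 x.2).ne',
        aux_log_binPMF hp hp1 x.2]
      ring
    rw [Finset.sum_congr rfl e, Finset.sum_sub_distrib, Finset.sum_sub_distrib,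
      ← Finset.sum_mul, ← Finset.sum_mul, hA, hB]
  have hdiff : ∀ p : ℝ, 0 < p → p < 1 →
      diagRelEnt τ ρ p - diagRelEnt τ ρ pstar =
      (τ:ℝ) * (pstar * (Real.log pstar - Real.log p) +
        (1 - pstar) * (Real.log (1 - pstar) - Real.log (1 - p))) := by
    intro p hp hp1
    rw [hD p hp hp1, hD pstar hq0 hq1]
    ring
  have hge : ∀ p : ℝ, 0 < p → p < 1 → diagRelEnt τ ρ pstar ≤ diagRelEnt τ ρ p := by
    intro p hp hp1
    have hb := aux_bern_nonneg hq0 hq1 hp hp1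
    have := hdiff p hp hp1
    nlinarith
  have hgt : ∀ p : ℝ, 0 < p → p < 1 → p ≠ pstar →
      diagRelEnt τ ρ pstar < diagRelEnt τ ρ p := by
    intro p hp hp1 hne
    have hb := aux_bern_pos hq0 hq1 hp hp1 hne
    have := hdiff p hp hp1
    nlinarith
  have hlogσ : ∀ p : ℝ, matLog (binDiag τ p) =
      Matrix.diagonal (fun x : latticeFinset τ => (Real.log (binPMF τ p (x:ℤ)) : ℂ)) :=
    fun p => aux_matLog_diagonal (fun x : latticeFinset τ => binPMF τ p (x:ℤ))
  have htr_real : (ρ * matLog ρ).trace = (((ρ * matLog ρ).trace.re : ℝ) : ℂ) := by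
    rw [aux_trace_mul_matLog_self ρ hherm]
    simp
  have key1 : ∀ p : ℝ, 0 < p → p < 1 →
      (ρ * (matLog ρ - matLog (binDiag τ p))).trace =
        ((diagRelEnt τ ρ p + cohRelEnt τ ρ : ℝ) : ℂ) := by
    intro p hp hp1
    rw [Matrix.mul_sub, Matrix.trace_sub, hlogσ p, aux_trace_mul_diagonal]
    have e2 : ∑ x : latticeFinset τ, ρ x x * ((Real.log (binPMF τ p (x:ℤ)) : ℝ) : ℂ)
        = ((∑ x : latticeFinset τ, (ρ x x).re * Real.log (binPMF τ p (x:ℤ)) : ℝ) : ℂ) := by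
      push_cast
      refine Finset.sum_congr rfl fun x _ => ?_
      rw [hPre x]
      simp
    have hreal : diagRelEnt τ ρ p + cohRelEnt τ ρ =
        (ρ * matLog ρ).trace.re
          - ∑ x : latticeFinset τ, (ρ x x).re * Real.log (binPMF τ p (x:ℤ)) := by
      rw [diagRelEnt, cohRelEnt]
      have e : ∀ x ∈ Finset.univ, (ρ x x).re * Real.log ((ρ x x).re / binPMF τ p (x:ℤ))
          = (ρ x x).re * Real.log (ρ x x).re
            - (ρ x x).re * Real.log (binPMF τ p (x:ℤ)) := by
        intro x _
        rw [Real.log_div (hPpos x).ne' (aux_binPMF_pos hp hp1 x.2).ne']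
        ring
      rw [Finset.sum_congr rfl e, Finset.sum_sub_distrib]
      ring
    rw [e2, htr_real, hreal]
    push_cast
    ring
  have hq : ∀ p : ℝ, 0 < p → p < 1 →
      qRelEnt τ ρ p = diagRelEnt τ ρ p + cohRelEnt τ ρ := by
    intro p hp hp1
    rw [qRelEnt, key1 p hp hp1]
    exact Complex.ofReal_re _
  refine ⟨fun p hp => key1 p hp.1 hp.2, ⟨hq0, hq1⟩, ?_, ?_, ?_, ?_,
    hq pstar hq0 hq1⟩
  · constructor
    · exact ⟨pstar, ⟨hq0, hq1⟩, rfl⟩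
    · rintro r ⟨p, hp, rfl⟩
      rw [hq p hp.1 hp.2, hq pstar hq0 hq1]
      have := hge p hp.1 hp.2
      linarith
  · constructor
    · exact ⟨pstar, ⟨hq0, hq1⟩, rfl⟩
    · rintro r ⟨p, hp, rfl⟩
      exact hge p hp.1 hp.2
  · intro p hp heq
    by_contra hne
    have := hgt p hp.1 hp.2 hne
    rw [hq p hp.1 hp.2, hq pstar hq0 hq1] at heq
    linarith
  · intro p hp heq
    by_contra hne
    have := hgt p hp.1 hp.2 hne
    linarith
end

section
/- Let U be a 2×2 complex matrix with entries U_{ab}, a,b ∈ {0,1}. Let τ ≥ 3 be an integer and N₊, N₋ ≥ 1 integers with N₊ + N₋ = τ − 1, and fix a, b ∈ {0,1}. Then the sum over all sequences (k₁, …, k_{τ−1}) ∈ {0,1}^{τ−1} with k₁ = 1, k_{τ−1} = 0, and Σ_{i=1}^{τ−1} k_i = N₋, of the product U_{a,k_{τ−1}} · U_{k_{τ−1},k_{τ−2}} ⋯ U_{k₂,k₁} · U_{k₁,b}, equals Σ_{N=1}^{min(N₊,N₋)} C(N₊−1, N−1) · C(N₋−1, N−1) · U_{a,0} · U₀₀^{N₊−N}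 · U₁₁^{N₋−N} · U₀₁^{N} · U₁₀^{N−1} · U_{1,b}. -/
/-- Access the coin-outcome sequence `k₁, …, k_{τ−1}` (encoded as a function
`Fin (τ−1) → Fin 2`) using one-based indices: `seqVal τ k i = k_i` for
`1 ≤ i ≤ τ−1`, and junk value `0` otherwise. -/
def seqVal (τ : ℕ) (k : Fin (τ - 1) → Fin 2) (i : ℕ) : Fin 2 :=
  if h : 1 ≤ i ∧ i ≤ τ - 1 then k ⟨i - 1, by omega⟩ else 0


open Finset

noncomputable def F1 (U : Matrix (Fin 2) (Fin 2) ℂ) (p q : ℕ) : ℂ :=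
  ∑ j ∈ Finset.range q, ((p - 1).choose j : ℂ) * ((q - 1).choose j : ℂ) *
    U 0 0 ^ (p - 1 - j) * U 1 1 ^ (q - 1 - j) * U 0 1 ^ (j + 1) * U 1 0 ^ j

noncomputable def F0 (U : Matrix (Fin 2) (Fin 2) ℂ) (p q : ℕ) : ℂ :=
  if q = 0 then U 0 0 ^ (p - 1) else
  ∑ j ∈ Finset.range q, ((q - 1).choose j : ℂ) * ((p - 1).choose (j + 1) : ℂ) *
    U 0 0 ^ (p - 2 - j) * U 1 1 ^ (q - 1 - j) * (U 0 1 * U 1 0) ^ (j + 1)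

lemma F1_zero (U : Matrix (Fin 2) (Fin 2) ℂ) (p : ℕ) : F1 U p 0 = 0 := by simp [F1]

lemma F0_one (U : Matrix (Fin 2) (Fin 2) ℂ) (q : ℕ) (hq : 1 ≤ q) : F0 U 1 q = 0 := by
  rw [F0, if_neg (by omega)]
  apply Finset.sum_eq_zero
  intro j _
  simp

lemma identity1 (U : Matrix (Fin 2) (Fin 2) ℂ) (p q : ℕ) (hp : 1 ≤ p) :
    F0 U (p + 1) q = U 0 0 * F0 U p q + U 1 0 * F1 U p q := by
  obtain ⟨p, rfl⟩ : ∃ p', p = p' + 1 := ⟨p - 1, by omega⟩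
  rcases Nat.eq_zero_or_pos q with hq | hq
  · subst hq
    simp [F0, F1, pow_succ]
    ring
  · have hq0 : q ≠ 0 := by omega
    rw [F0, F0, if_neg hq0, if_neg hq0, F1, Finset.mul_sum, Finset.mul_sum,
      ← Finset.sum_add_distrib]
    refine Finset.sum_congr rfl fun j hj => ?_
    rw [show p + 1 + 1 - 1 = p + 1 by omega, show p + 1 + 1 - 2 - j = p - j by omega,
      show p + 1 - 1 = p by omega, show p + 1 - 2 - j = p - 1 - j by omega,
      Nat.choose_succ_succ]
    rcases lt_or_ge j p with h | h
    · rw [show p - j = (p - 1 - j) + 1 by omega]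
      push_cast
      ring
    · rw [Nat.choose_eq_zero_of_lt (show p < j + 1 by omega)]
      push_cast
      ring

lemma identity2 (U : Matrix (Fin 2) (Fin 2) ℂ) (p q : ℕ) (hp : 1 ≤ p) (hq : 1 ≤ q) :
    F1 U p q = U 0 1 * F0 U p (q - 1) + U 1 1 * F1 U p (q - 1) := by
  obtain ⟨p, rfl⟩ : ∃ p', p = p' + 1 := ⟨p - 1, by omega⟩
  rcases eq_or_lt_of_le hq with hq1 | hq2
  · rw [← hq1]
    simp [F1, F0]
    ring
  · obtain ⟨q', rfl⟩ : ∃ q', q = q' + 2 := ⟨q - 2, by omega⟩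
    have key : ∀ j ∈ Finset.range (q' + 2),
        ((p + 1 - 1).choose j : ℂ) * ((q' + 2 - 1).choose j : ℂ) *
          U 0 0 ^ (p + 1 - 1 - j) * U 1 1 ^ (q' + 2 - 1 - j) * U 0 1 ^ (j + 1) * U 1 0 ^ j
        = ((p.choose j : ℂ) * (q'.choose j : ℂ) *
            U 0 0 ^ (p - j) * U 1 1 ^ (q' + 1 - j) * U 0 1 ^ (j + 1) * U 1 0 ^ j)
          + (if j = 0 then 0 else
            (p.choose j : ℂ) * (q'.choose (j - 1) : ℂ) *
              U 0 0 ^ (p - j) * U 1 1 ^ (q' + 1 - j) * U 0 1 ^ (j + 1) * U 1 0 ^ j) := by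
      intro j _
      rcases j with _ | i
      · simp
      · rw [if_neg (by omega), show q' + 2 - 1 = q' + 1 by omega, Nat.choose_succ_succ,
          show p + 1 - 1 = p by omega, show i + 1 - 1 = i by omega]
        push_cast
        ring
    rw [F1, Finset.sum_congr rfl key, Finset.sum_add_distrib,
      show q' + 2 - 1 = q' + 1 by omega, add_comm (U 0 1 * F0 U (p + 1) (q' + 1))]
    congr 1
    · -- first part equals U 1 1 * F1 _ (q'+1)
      rw [Finset.sum_range_succ, Nat.choose_eq_zero_of_lt (show q' < q' + 1 by omega)]
      push_cast
      rw [F1, Finset.mul_sum]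
      simp only [mul_zero, zero_mul, add_zero]
      refine Finset.sum_congr rfl fun j hj => ?_
      simp only [Finset.mem_range] at hj
      rw [show p + 1 - 1 = p by omega, show q' + 1 - 1 = q' by omega,
        show q' + 1 - j = (q' - j) + 1 by omega]
      ring
    · -- second part: shift, equals U 0 1 * F0
      rw [Finset.sum_range_succ' _ (q' + 1), if_pos rfl, add_zero,
        F0, if_neg (by omega), Finset.mul_sum]
      refine Finset.sum_congr rfl fun i _ => ?_
      rw [if_neg (by omega), show i + 1 - 1 = i by omega,
        show p - (i + 1) = p + 1 - 2 - i by omega,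
        show q' + 1 - (i + 1) = q' + 1 - 1 - i by omega,
        show q' + 1 - 1 = q' by omega, show p + 1 - 1 = p by omega]
      push_cast
      ring

noncomputable def G (U : Matrix (Fin 2) (Fin 2) ℂ) (n q : ℕ) (f l : Fin 2) : ℂ :=
  ∑ k ∈ Finset.univ.filter (fun k : Fin (n + 1) → Fin 2 =>
      k 0 = f ∧ k (Fin.last n) = l ∧ (∑ i, ((k i : ℕ))) = q),
    ∏ i : Fin n, U (k i.succ) (k i.castSucc)

lemma G_zero (U : Matrix (Fin 2) (Fin 2) ℂ) (q : ℕ) (f l : Fin 2) :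
    G U 0 q f l = if f = l ∧ (f : ℕ) = q then 1 else 0 := by
  unfold G
  rw [Finset.sum_filter, Fintype.sum_eq_single (fun _ : Fin 1 => f)]
  · simp
  · intro k hk
    rw [if_neg]
    rintro ⟨h0, -, -⟩
    exact hk (funext fun i => by rw [Subsingleton.elim i 0, h0])

lemma prod_succ_eq (U : Matrix (Fin 2) (Fin 2) ℂ) {n : ℕ} (k : Fin (n + 2) → Fin 2) :
    ∏ i : Fin (n + 1), U (k i.succ) (k i.castSucc)
      = U (Fin.tail k 0) (k 0) *
        ∏ i : Fin n, U (Fin.tail k i.succ) (Fin.tail k i.castSucc) := by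
  rw [Fin.prod_univ_succ]
  rfl

lemma G_succ_aux (U : Matrix (Fin 2) (Fin 2) ℂ) (n q : ℕ) (f l : Fin 2) :
    G U (n + 1) q f l =
      ∑ g ∈ Finset.univ.filter (fun g : Fin (n + 1) → Fin 2 =>
          g (Fin.last n) = l ∧ (f : ℕ) + (∑ i, ((g i : ℕ))) = q),
        U (g 0) f * ∏ i : Fin n, U (g i.succ) (g i.castSucc) := by
  unfold G
  refine Finset.sum_bij' (fun k _ => Fin.tail k) (fun g _ => Fin.cons f g) ?_ ?_ ?_ ?_ ?_
  · intro k hk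
    simp only [Finset.mem_filter, Finset.mem_univ, true_and] at hk ⊢
    obtain ⟨h0, hl, hs⟩ := hk
    refine ⟨?_, ?_⟩
    · show k (Fin.last n).succ = l
      rw [Fin.succ_last]; exact hl
    · rw [Fin.sum_univ_succ] at hs
      rw [← hs, h0]
      rfl
  · intro g hg
    simp only [Finset.mem_filter, Finset.mem_univ, true_and] at hg ⊢
    obtain ⟨hl, hs⟩ := hg
    refine ⟨Fin.cons_zero _ _, ?_, ?_⟩
    · rw [← Fin.succ_last, Fin.cons_succ]; exact hl
    · rw [Fin.sum_univ_succ, Fin.cons_zero]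
      simpa using hs
  · intro k hk
    simp only [Finset.mem_filter, Finset.mem_univ, true_and] at hk
    obtain ⟨rfl, -, -⟩ := hk
    exact Fin.cons_self_tail k
  · intro g _
    exact Fin.tail_cons (α := fun _ : Fin (n + 2) => Fin 2) f g
  · intro k hk
    simp only [Finset.mem_filter, Finset.mem_univ, true_and] at hk
    rw [prod_succ_eq U k, hk.1]

lemma G_succ (U : Matrix (Fin 2) (Fin 2) ℂ) (n q : ℕ) (f l : Fin 2) :
    G U (n + 1) q f l =
      if (f : ℕ) ≤ q then
        U 0 f * G U n (q - (f : ℕ)) 0 l + U 1 f * G U n (q - (f : ℕ)) 1 l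
      else 0 := by
  rw [G_succ_aux]
  by_cases hfq : (f : ℕ) ≤ q
  · rw [if_pos hfq]
    rw [← Finset.sum_filter_add_sum_filter_not _ (fun g : Fin (n + 1) → Fin 2 => g 0 = 0)]
    congr 1
    · unfold G
      rw [Finset.mul_sum, Finset.filter_filter]
      rw [Finset.filter_congr (q := fun g : Fin (n + 1) → Fin 2 =>
        g 0 = 0 ∧ g (Fin.last n) = l ∧ (∑ i, ((g i : ℕ))) = q - (f : ℕ)) ?_]
      · refine Finset.sum_congr rfl fun g hg => ?_
        simp only [Finset.mem_filter] at hg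
        rw [hg.2.1]
      · intro g _
        constructor
        · rintro ⟨⟨h1, h2⟩, h3⟩; exact ⟨h3, h1, by omega⟩
        · rintro ⟨h3, h1, h2⟩; exact ⟨⟨h1, by omega⟩, h3⟩
    · unfold G
      rw [Finset.mul_sum, Finset.filter_filter]
      rw [Finset.filter_congr (q := fun g : Fin (n + 1) → Fin 2 =>
        g 0 = 1 ∧ g (Fin.last n) = l ∧ (∑ i, ((g i : ℕ))) = q - (f : ℕ)) ?_]
      · refine Finset.sum_congr rfl fun g hg => ?_
        simp only [Finset.mem_filter] at hg
        rw [hg.2.1]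
      · intro g _
        constructor
        · rintro ⟨⟨h1, h2⟩, h3⟩
          exact ⟨Fin.eq_one_of_ne_zero _ h3, h1, by omega⟩
        · rintro ⟨h3, h1, h2⟩
          refine ⟨⟨h1, by omega⟩, by rw [h3]; exact one_ne_zero⟩
  · rw [if_neg hfq, Finset.filter_false_of_mem, Finset.sum_empty]
    intro g _
    rintro ⟨-, h2⟩
    omega

lemma G_closed (U : Matrix (Fin 2) (Fin 2) ℂ) : ∀ n q : ℕ,
    (G U n q 0 0 = if q ≤ n then F0 U (n + 1 - q) q else 0) ∧
    (G U n q 1 0 = if 1 ≤ q ∧ q ≤ n then F1 U (n + 1 - q) q else 0) := by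
  intro n
  induction n with
  | zero =>
    intro q
    constructor
    · rw [G_zero]
      by_cases hq : q = 0
      · subst hq; simp [F0]
      · rw [if_neg (by simp [hq, eq_comm]), if_neg (by omega)]
    · rw [G_zero, if_neg (by simp), if_neg (by omega)]
  | succ n ih =>
    intro q
    constructor
    · rw [G_succ, if_pos (by omega : ((0 : Fin 2) : ℕ) ≤ q)]
      simp only [Fin.val_zero, Nat.sub_zero]
      rw [(ih q).1, (ih q).2]
      by_cases h1 : q ≤ n
      · by_cases h2 : 1 ≤ q
        · rw [if_pos h1, if_pos (show 1 ≤ q ∧ q ≤ n from ⟨h2, h1⟩),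
            if_pos (show q ≤ n + 1 by omega),
            show n + 1 + 1 - q = (n + 1 - q) + 1 by omega,
            identity1 U (n + 1 - q) q (by omega)]
        · have hq0 : q = 0 := by omega
          subst hq0
          rw [if_pos h1, if_neg (by omega), if_pos (by omega),
            show n + 1 + 1 - 0 = (n + 1 - 0) + 1 by omega,
            identity1 U (n + 1 - 0) 0 (by omega), F1_zero]
      · by_cases h2 : q = n + 1
        · subst h2
          rw [if_neg h1, if_neg (by omega), if_pos (le_refl _),
            show n + 1 + 1 - (n + 1) = 1 by omega, F0_one U (n + 1) (by omega)]
          ring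
        · rw [if_neg h1, if_neg (by omega), if_neg (by omega)]
          ring
    · rw [G_succ]
      simp only [Fin.val_one]
      by_cases hq : 1 ≤ q
      · rw [if_pos hq, (ih (q - 1)).1, (ih (q - 1)).2]
        by_cases h1 : q ≤ n + 1
        · by_cases h2 : 2 ≤ q
          · rw [if_pos (show q - 1 ≤ n by omega),
              if_pos (show 1 ≤ q - 1 ∧ q - 1 ≤ n by omega),
              if_pos (show 1 ≤ q ∧ q ≤ n + 1 from ⟨hq, h1⟩),
              show n + 1 - (q - 1) = n + 1 + 1 - q by omega,
              identity2 U (n + 1 + 1 - q) q (by omega) hq]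
          · have hq1 : q = 1 := by omega
            subst hq1
            rw [if_pos (show 1 - 1 ≤ n by omega), if_neg (by omega),
              if_pos (show 1 ≤ 1 ∧ 1 ≤ n + 1 from ⟨le_refl _, h1⟩),
              show n + 1 - (1 - 1) = n + 1 by omega,
              show n + 1 + 1 - 1 = n + 1 by omega,
              identity2 U (n + 1) 1 (by omega) (by omega), F1_zero]
        · rw [if_neg (show ¬(q - 1 ≤ n) by omega), if_neg (by omega), if_neg (by omega)]
          ring
      · rw [if_neg (by omega), if_neg (by omega)]

lemma seqVal_eq (τ : ℕ) (k : Fin (τ - 1) → Fin 2) (i : ℕ) (h1 : 1 ≤ i) (h2 : i ≤ τ - 1) :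
    seqVal τ k i = k ⟨i - 1, by omega⟩ := dif_pos ⟨h1, h2⟩

lemma F1_trunc (U : Matrix (Fin 2) (Fin 2) ℂ) (p q : ℕ) (hp : 1 ≤ p) :
    F1 U p q = ∑ j ∈ Finset.range (min p q),
      ((p - 1).choose j : ℂ) * ((q - 1).choose j : ℂ) *
        U 0 0 ^ (p - 1 - j) * U 1 1 ^ (q - 1 - j) * U 0 1 ^ (j + 1) * U 1 0 ^ j := by
  rw [F1]
  symm
  apply Finset.sum_subset
  · exact Finset.range_subset_range.2 (min_le_right _ _)
  · intro j hj hj2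
    simp only [Finset.mem_range] at hj hj2
    rw [Nat.choose_eq_zero_of_lt (show p - 1 < j by omega)]
    push_cast
    ring

/-- Block-counting formula for the restricted path sums of a quantum walk:
for a 2×2 coin matrix `U`, `τ ≥ 3`, `Np, Nm ≥ 1` with `Np + Nm = τ − 1`, and
`a, b ∈ {0,1}`, the sum over all sequences `(k₁, …, k_{τ−1}) ∈ {0,1}^{τ−1}` with
`k₁ = 1`, `k_{τ−1} = 0` and `Σᵢ kᵢ = Nm` of the products
`U_{a,k_{τ−1}} · U_{k_{τ−1},k_{τ−2}} ⋯ U_{k₂,k₁} · U_{k₁,b}` equals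
`Σ_{N=1}^{min(Np,Nm)} C(Np−1,N−1)·C(Nm−1,N−1)·U_{a,0}·U₀₀^{Np−N}·U₁₁^{Nm−N}·U₀₁^N·U₁₀^{N−1}·U_{1,b}`. -/
theorem qw_path_sum_hypergeometric (τ Np Nm : ℕ) (hτ : 3 ≤ τ)
    (hNp : 1 ≤ Np) (hNm : 1 ≤ Nm) (hsum : Np + Nm = τ - 1)
    (U : Matrix (Fin 2) (Fin 2) ℂ) (a b : Fin 2) :
    (∑ k ∈ Finset.univ.filter (fun k : Fin (τ - 1) → Fin 2 =>
        seqVal τ k 1 = 1 ∧ seqVal τ k (τ - 1) = 0 ∧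
          (∑ i ∈ Finset.Icc 1 (τ - 1), (seqVal τ k i : ℕ)) = Nm),
      U a (seqVal τ k (τ - 1)) *
        (∏ i ∈ Finset.Icc 1 (τ - 2), U (seqVal τ k (i + 1)) (seqVal τ k i)) *
        U (seqVal τ k 1) b) =
    ∑ N ∈ Finset.Icc 1 (min Np Nm),
      ((Np - 1).choose (N - 1) : ℂ) * ((Nm - 1).choose (N - 1) : ℂ) *
        U a 0 * U 0 0 ^ (Np - N) * U 1 1 ^ (Nm - N) * U 0 1 ^ N *
        U 1 0 ^ (N - 1) * U 1 b := by
  obtain ⟨n, rfl⟩ : ∃ n, τ = n + 3 := ⟨τ - 3, by omega⟩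
  -- facts about seqVal
  have hsv : ∀ (k : Fin (n + 2) → Fin 2) (i : ℕ) (h1 : 1 ≤ i) (h2 : i ≤ n + 2),
      seqVal (n + 3) k i = k ⟨i - 1, by omega⟩ := fun k i h1 h2 => seqVal_eq (n + 3) k i h1 h2
  -- sum conversion
  have hsum' : ∀ k : Fin (n + 2) → Fin 2,
      (∑ i ∈ Finset.Icc 1 (n + 2), (seqVal (n + 3) k i : ℕ)) = ∑ i, (k i : ℕ) := by
    intro k
    rw [← Finset.Ico_add_one_right_eq_Icc, Finset.sum_Ico_eq_sum_range]
    simp only [Nat.succ_sub_one, Nat.add_sub_cancel]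
    rw [← Fin.sum_univ_eq_sum_range (fun j => (seqVal (n + 3) k (1 + j) : ℕ)) (n + 2)]
    refine Finset.sum_congr rfl fun i _ => ?_
    rw [hsv k (1 + (i : ℕ)) (by omega) (by omega)]
    congr 1
    exact Fin.ext (by simp)
  -- product conversion
  have hprod : ∀ k : Fin (n + 2) → Fin 2,
      (∏ i ∈ Finset.Icc 1 (n + 1), U (seqVal (n + 3) k (i + 1)) (seqVal (n + 3) k i))
        = ∏ i : Fin (n + 1), U (k i.succ) (k i.castSucc) := by
    intro k
    rw [← Finset.Ico_add_one_right_eq_Icc, Finset.prod_Ico_eq_prod_range]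
    simp only [Nat.succ_sub_one, Nat.add_sub_cancel]
    rw [← Fin.prod_univ_eq_prod_range
        (fun j => U (seqVal (n + 3) k (1 + j + 1)) (seqVal (n + 3) k (1 + j))) (n + 1)]
    refine Finset.prod_congr rfl fun i _ => ?_
    rw [hsv k (1 + (i : ℕ) + 1) (by omega) (by omega), hsv k (1 + (i : ℕ)) (by omega) (by omega)]
    congr 1
    · exact congrArg k (Fin.ext (by simp [Fin.val_succ]; omega))
    · exact congrArg k (Fin.ext (by simp))
  -- rewrite LHS into G form
  have step1 : (∑ k ∈ Finset.univ.filter (fun k : Fin (n + 3 - 1) → Fin 2 =>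
        seqVal (n + 3) k 1 = 1 ∧ seqVal (n + 3) k (n + 3 - 1) = 0 ∧
          (∑ i ∈ Finset.Icc 1 (n + 3 - 1), (seqVal (n + 3) k i : ℕ)) = Nm),
      U a (seqVal (n + 3) k (n + 3 - 1)) *
        (∏ i ∈ Finset.Icc 1 (n + 3 - 2), U (seqVal (n + 3) k (i + 1)) (seqVal (n + 3) k i)) *
        U (seqVal (n + 3) k 1) b)
      = U a 0 * G U (n + 1) Nm 1 0 * U 1 b := by
    unfold G
    rw [Finset.mul_sum, Finset.sum_mul]
    rw [Finset.filter_congr (q := fun k : Fin (n + 2) → Fin 2 =>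
      k 0 = 1 ∧ k (Fin.last (n + 1)) = 0 ∧ (∑ i, ((k i : ℕ))) = Nm) ?_]
    · refine Finset.sum_congr rfl fun k hk => ?_
      simp only [Finset.mem_filter] at hk
      obtain ⟨-, h0, hl, -⟩ := hk
      rw [show ((Finset.Icc 1 (n + 3 - 2)) : Finset ℕ) = Finset.Icc 1 (n + 1) from rfl,
        hprod k, hsv k 1 (by omega) (by omega), hsv k (n + 3 - 1) (by omega) (by omega)]
      rw [show (⟨1 - 1, by omega⟩ : Fin (n + 2)) = 0 from rfl,
        show (⟨n + 3 - 1 - 1, by omega⟩ : Fin (n + 2)) = Fin.last (n + 1) from rfl, h0, hl]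
    · intro k _
      rw [show ((Finset.Icc 1 (n + 3 - 1)) : Finset ℕ) = Finset.Icc 1 (n + 2) from rfl,
        hsum' k, hsv k 1 (by omega) (by omega), hsv k (n + 3 - 1) (by omega) (by omega)]
      rw [show (⟨1 - 1, by omega⟩ : Fin (n + 2)) = 0 from rfl,
        show (⟨n + 3 - 1 - 1, by omega⟩ : Fin (n + 2)) = Fin.last (n + 1) from rfl]
  rw [step1, (G_closed U (n + 1) Nm).2, if_pos ⟨hNm, by omega⟩,
    show n + 1 + 1 - Nm = Np by omega, F1_trunc U Np Nm hNp]
  rw [Finset.mul_sum, Finset.sum_mul, ← Finset.Ico_add_one_right_eq_Icc, Finset.sum_Ico_eq_sum_range]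
  simp only [Nat.succ_sub_one, Nat.add_sub_cancel]
  refine Finset.sum_congr rfl fun j _ => ?_
  rw [show 1 + j - 1 = j by omega, show Np - (1 + j) = Np - 1 - j by omega,
    show Nm - (1 + j) = Nm - 1 - j by omega, show 1 + j = j + 1 by omega]
  ring
end

section
/- Let ρ be an n×n positive definite Hermitian complex matrix with Tr ρ = 1 and eigenvalues λ₁, …, λ_n. Then −Σ_i ρ_ii · ln ρ_ii ≥ −Σ_i λ_i · ln λ_i; that is, the Shannon entropy of the diagonal of ρ (in the standard basis) is at least the von Neumann entropy of ρ, so the relative entropy of coherence C(ρ) = H(diag ρ) − S(ρ) is nonnegative. -/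
open scoped ComplexOrder

/-- For a faithful (positive definite) density matrix `ρ` with eigenvalues
`λ₁, …, λ_n`, the Shannon entropy of the diagonal of `ρ` in the standard basis
is at least the von Neumann entropy:
`−Σ_i ρ_ii · ln ρ_ii ≥ −Σ_i λ_i · ln λ_i`; hence the relative entropy of
coherence `C(ρ) = H(diag ρ) − S(ρ)` is nonnegative. -/
theorem diag_entropy_ge_vonNeumann {n : ℕ}
    (ρ : Matrix (Fin n) (Fin n) ℂ) (hρ : ρ.PosDef) (htr : ρ.trace = 1) :
    -∑ i, (ρ i i).re * Real.log (ρ i i).re ≥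
      -∑ i, hρ.1.eigenvalues i * Real.log (hρ.1.eigenvalues i) := by
  have hA := hρ.1
  set U : Matrix (Fin n) (Fin n) ℂ := (hA.eigenvectorUnitary : Matrix (Fin n) (Fin n) ℂ) with hU
  set w : Fin n → Fin n → ℝ := fun i j => Complex.normSq (U i j) with hw
  set lam : Fin n → ℝ := hA.eigenvalues with hlam
  have hwnn : ∀ i j, 0 ≤ w i j := fun i j => Complex.normSq_nonneg _
  -- diagonal entries as convex combinations of eigenvalues
  have hdiag : ∀ i, (ρ i i).re = ∑ j, w i j * lam j := by
    intro i
    conv_lhs => rw [hA.spectral_theorem, Unitary.conjStarAlgAut_apply]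
    rw [Matrix.mul_apply, Complex.re_sum]
    refine Finset.sum_congr rfl fun j _ => ?_
    rw [Matrix.mul_diagonal, Matrix.star_apply]
    have h : U i j * (RCLike.ofReal ∘ hA.eigenvalues) j * star (U i j)
        = ((w i j * lam j : ℝ) : ℂ) := by
      simp only [Function.comp_apply, RCLike.ofReal, Complex.coe_algebraMap]
      rw [mul_comm (U i j) _, mul_assoc]
      rw [show star (U i j) = (starRingEnd ℂ) (U i j) from rfl, Complex.mul_conj]
      push_cast
      ring
    rw [h, Complex.ofReal_re]
  -- row sums of w are 1
  have hrow : ∀ i, ∑ j, w i j = 1 := by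
    intro i
    have h1 : U * star U = 1 := Matrix.mem_unitaryGroup_iff.mp hA.eigenvectorUnitary.2
    have := congrFun (congrFun (congrArg (fun M => M) h1) i) i
    have h2 : (U * star U) i i = 1 := by rw [h1]; simp
    rw [Matrix.mul_apply] at h2
    have : ∑ j, (w i j : ℂ) = 1 := by
      rw [← h2]
      refine Finset.sum_congr rfl fun j _ => ?_
      simp [hw, Matrix.star_apply, Complex.mul_conj]
    exact_mod_cast this
  -- column sums of w are 1
  have hcol : ∀ j, ∑ i, w i j = 1 := by
    intro j
    have h1 : star U * U = 1 := Matrix.mem_unitaryGroup_iff'.mp hA.eigenvectorUnitary.2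
    have h2 : (star U * U) j j = 1 := by rw [h1]; simp
    rw [Matrix.mul_apply] at h2
    have : ∑ i, (w i j : ℂ) = 1 := by
      rw [← h2]
      refine Finset.sum_congr rfl fun i _ => ?_
      simp [hw, Matrix.star_apply, Complex.mul_conj, mul_comm]
    exact_mod_cast this
  have hlampos : ∀ j, 0 ≤ lam j := fun j => (hρ.eigenvalues_pos j).le
  -- Jensen per row
  have key : ∀ i, (ρ i i).re * Real.log ((ρ i i).re) ≤ ∑ j, w i j * (lam j * Real.log (lam j)) := by
    intro i
    rw [hdiag i]
    have := Real.convexOn_mul_log.map_sum_le (t := Finset.univ) (w := w i) (p := lam)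
      (fun j _ => hwnn i j) (hrow i) (fun j _ => hlampos j)
    simpa using this
  have main : ∑ i, (ρ i i).re * Real.log ((ρ i i).re)
      ≤ ∑ j, lam j * Real.log (lam j) := by
    calc ∑ i, (ρ i i).re * Real.log ((ρ i i).re)
        ≤ ∑ i, ∑ j, w i j * (lam j * Real.log (lam j)) :=
          Finset.sum_le_sum fun i _ => key i
      _ = ∑ j, (∑ i, w i j) * (lam j * Real.log (lam j)) := by
          rw [Finset.sum_comm]; simp [Finset.sum_mul]
      _ = ∑ j, lam j * Real.log (lam j) := by
          refine Finset.sum_congr rfl fun j _ => ?_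
          rw [hcol j, one_mul]
  linarith
end
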